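/- Suppose f and g satisfy condition (H2) with parameters q > 0, K₁ ≥ 0, K₂ ≥ 0 and V₁. Define, for x, y ∈ ℝ^d, LU(x,y) := (q/2)·(1+|x|²)^{q/2−2}·[(1+|x|²)·(2⟨x, f(x,y)⟩ + |g(x,y)|²) + (q−2)·|g(x,y)ᵀx|²] (this equals ⟨f(x,y), ∇U(x)⟩ + ½⟨g(x,y), ∇²U(x)·g(x,y)⟩ for U(x) = (1+|x|²)^{q/2}). Then for all x, y ∈ ℝ^d: LU(x,y) ≤ (q/2)·K₁·(1+|x|^q+|y|^q) − (q/2)·K₂·(V₁(x) − V₁(y)). -/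

import Mathlib

/-!
Write `a = 1 + |x|²`. By Cauchy–Schwarz `|gᵀx|² ≤ |g|²|x|² ≤ a|g|²`, so the Itô correction
`a|g|² + (q - 2)|gᵀx|²` is at most `max(q - 1, 1) · a|g|²`. Hence `LU(x,y)` is at most
`(q/2) · a^{q/2-1} (2⟨x, f⟩ + max(q - 1, 1)|g|²)`, which (H2) bounds.
-/

open scoped RealInnerProductSpace

/-- Frobenius (Hilbert–Schmidt) norm of a real matrix. -/
noncomputable def frobNorm {n k : ℕ} (A : Matrix (Fin n) (Fin k) ℝ) : ℝ :=
  Real.sqrt (∑ i, ∑ j, (A i j) ^ 2)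

/-- Matrix–vector product, producing an element of Euclidean space. -/
noncomputable def mvec {n k : ℕ} (A : Matrix (Fin n) (Fin k) ℝ)
    (v : EuclideanSpace ℝ (Fin k)) : EuclideanSpace ℝ (Fin n) :=
  (EuclideanSpace.equiv (Fin n) ℝ).symm (A.mulVec (EuclideanSpace.equiv (Fin k) ℝ v))

theorem frobNorm_sq {n k : ℕ} (A : Matrix (Fin n) (Fin k) ℝ) :
    frobNorm A ^ 2 = ∑ i, ∑ j, A i j ^ 2 :=
  Real.sq_sqrt <| Finset.sum_nonneg fun _ _ => Finset.sum_nonneg fun _ _ => sq_nonneg _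

theorem frobNorm_transpose {n k : ℕ} (A : Matrix (Fin n) (Fin k) ℝ) :
    frobNorm A.transpose = frobNorm A := by
  rw [frobNorm, frobNorm, Finset.sum_comm]
  rfl

theorem mvec_apply {n k : ℕ} (A : Matrix (Fin n) (Fin k) ℝ) (v : EuclideanSpace ℝ (Fin k))
    (i : Fin n) : mvec A v i = ∑ j, A i j * v j :=
  rfl

theorem norm_mvec_sq_le {n k : ℕ} (A : Matrix (Fin n) (Fin k) ℝ) (v : EuclideanSpace ℝ (Fin k)) :
    ‖mvec A v‖ ^ 2 ≤ frobNorm A ^ 2 * ‖v‖ ^ 2 := by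
  rw [EuclideanSpace.real_norm_sq_eq, EuclideanSpace.real_norm_sq_eq, frobNorm_sq,
    Finset.sum_mul]
  gcongr with i
  rw [mvec_apply]
  exact Finset.sum_mul_sq_le_sq_mul_sq _ (A i) v

theorem itoCorrection_le_max {a F G q : ℝ} (hG₀ : 0 ≤ G) (hG : G ≤ a * F) :
    a * F + (q - 2) * G ≤ max (q - 1) 1 * (a * F) := by
  rcases le_or_gt q 2 with hq | hq
  · have hmax : 1 ≤ max (q - 1) 1 := le_max_right _ _
    nlinarith
  · rw [max_eq_left (by linarith)]
    nlinarith

theorem stmt1_general (d m : ℕ)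
    (f : EuclideanSpace ℝ (Fin d) → EuclideanSpace ℝ (Fin d) → EuclideanSpace ℝ (Fin d))
    (g : EuclideanSpace ℝ (Fin d) → EuclideanSpace ℝ (Fin d) → Matrix (Fin d) (Fin m) ℝ)
    (q K₁ K₂ : ℝ) (hq : 0 < q)
    (V₁ : EuclideanSpace ℝ (Fin d) → ℝ)
    (hH2 : ∀ x y : EuclideanSpace ℝ (Fin d),
      (1 + ‖x‖ ^ 2) ^ (q / 2 - 1) *
          (2 * ⟪x, f x y⟫ + max (q - 1) 1 * frobNorm (g x y) ^ 2)
        ≤ K₁ * (1 + ‖x‖ ^ q + ‖y‖ ^ q) - K₂ * (V₁ x - V₁ y)) :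
    ∀ x y : EuclideanSpace ℝ (Fin d),
      (q / 2) * ((1 + ‖x‖ ^ 2) ^ (q / 2 - 2) *
          ((1 + ‖x‖ ^ 2) * (2 * ⟪x, f x y⟫ + frobNorm (g x y) ^ 2)
            + (q - 2) * ‖mvec (g x y).transpose x‖ ^ 2))
        ≤ (q / 2) * K₁ * (1 + ‖x‖ ^ q + ‖y‖ ^ q) - (q / 2) * K₂ * (V₁ x - V₁ y) := by
  intro x y
  set a := 1 + ‖x‖ ^ 2
  have ha : 0 < a := by positivity
  have hcorr : a * frobNorm (g x y) ^ 2 + (q - 2) * ‖mvec (g x y).transpose x‖ ^ 2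
      ≤ max (q - 1) 1 * (a * frobNorm (g x y) ^ 2) := by
    refine itoCorrection_le_max (sq_nonneg _) ?_
    calc ‖mvec (g x y).transpose x‖ ^ 2 ≤ frobNorm (g x y) ^ 2 * ‖x‖ ^ 2 := by
          simpa only [frobNorm_transpose] using norm_mvec_sq_le (g x y).transpose x
      _ ≤ a * frobNorm (g x y) ^ 2 := by nlinarith [sq_nonneg (frobNorm (g x y))]
  have hpow : a ^ (q / 2 - 1) = a ^ (q / 2 - 2) * a := by
    rw [← Real.rpow_add_one ha.ne']
    ring_nf
  calc (q / 2) * (a ^ (q / 2 - 2) *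
          (a * (2 * ⟪x, f x y⟫ + frobNorm (g x y) ^ 2) + (q - 2) * ‖mvec (g x y).transpose x‖ ^ 2))
      ≤ (q / 2) * (a ^ (q / 2 - 1) * (2 * ⟪x, f x y⟫ + max (q - 1) 1 * frobNorm (g x y) ^ 2)) := by
        rw [hpow, mul_assoc]
        gcongr
        linarith
    _ ≤ (q / 2) * (K₁ * (1 + ‖x‖ ^ q + ‖y‖ ^ q) - K₂ * (V₁ x - V₁ y)) := by
        gcongr
        exact hH2 x y
    _ = (q / 2) * K₁ * (1 + ‖x‖ ^ q + ‖y‖ ^ q) - (q / 2) * K₂ * (V₁ x - V₁ y) := by ring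

theorem stmt1 (d m : ℕ) (hd : 1 ≤ d) (hm : 1 ≤ m)
    (f : EuclideanSpace ℝ (Fin d) → EuclideanSpace ℝ (Fin d) → EuclideanSpace ℝ (Fin d))
    (g : EuclideanSpace ℝ (Fin d) → EuclideanSpace ℝ (Fin d) → Matrix (Fin d) (Fin m) ℝ)
    (q K₁ K₂ : ℝ) (hq : 0 < q) (hK₁ : 0 ≤ K₁) (hK₂ : 0 ≤ K₂)
    (V₁ : EuclideanSpace ℝ (Fin d) → ℝ) (hV₁ : ∀ x, 0 ≤ V₁ x)
    (hH2 : ∀ x y : EuclideanSpace ℝ (Fin d),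
      (1 + ‖x‖ ^ 2) ^ (q / 2 - 1) *
          (2 * ⟪x, f x y⟫ + max (q - 1) 1 * frobNorm (g x y) ^ 2)
        ≤ K₁ * (1 + ‖x‖ ^ q + ‖y‖ ^ q) - K₂ * (V₁ x - V₁ y)) :
    ∀ x y : EuclideanSpace ℝ (Fin d),
      (q / 2) * ((1 + ‖x‖ ^ 2) ^ (q / 2 - 2) *
          ((1 + ‖x‖ ^ 2) * (2 * ⟪x, f x y⟫ + frobNorm (g x y) ^ 2)
            + (q - 2) * ‖mvec (g x y).transpose x‖ ^ 2))
        ≤ (q / 2) * K₁ * (1 + ‖x‖ ^ q + ‖y‖ ^ q) - (q / 2) * K₂ * (V₁ x - V₁ y) :=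
  stmt1_general d m f g q K₁ K₂ hq V₁ hH2
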